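/- arXiv:1209.1495 — 3 statements merged into one kernel-verified Lean document; each statement's English description precedes it below -/
import Mathlib

section
/- Let G be a γ-regular finite connected simple graph. Then for λ > 0 with λ ≠ k²π², one has det(cos√λ · γ·I − A) = 0 if and only if cos√λ ∈ σ(P), where P = (1/γ)A; equivalently, λ belongs to the spectrum σ_p if and only if λ = (2lπ ± arccos α)² for some eigenvalue α of P with −1 < α < 1 and some l ∈ ℤ. -/
open Matrix

/-- Let `G` be a `γ`-regular finite connected simple graph
with adjacency matrix `A` and transition matrix `P = (1/γ)A`. For `λ > 0` with
`λ ≠ k²π²`, one has `det(cos√λ · γI − A) = 0` iff `cos√λ` is an eigenvalue of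
`P`; equivalently, iff `λ = (2lπ ± arccos α)²` for some eigenvalue `α` of `P`
with `−1 < α < 1` and some `l ∈ ℤ`. -/
theorem regular_graph_characteristic_equation (n γ : ℕ) (hγ : 0 < γ)
    (G : SimpleGraph (Fin n)) [DecidableRel G.Adj]
    (hconn : G.Connected) (hreg : ∀ i, G.degree i = γ)
    (A P : Matrix (Fin n) (Fin n) ℝ)
    (hA : ∀ i k, A i k = if G.Adj i k then 1 else 0)
    (hP : P = (γ : ℝ)⁻¹ • A)
    (lam : ℝ) (hpos : 0 < lam)
    (hneq : ∀ k : ℤ, lam ≠ (k : ℝ) ^ 2 * Real.pi ^ 2) :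
    ((Real.cos (Real.sqrt lam) • ((γ : ℝ) • (1 : Matrix (Fin n) (Fin n) ℝ))
        - A).det = 0 ↔
      ∃ v : Fin n → ℝ, v ≠ 0 ∧ P *ᵥ v = Real.cos (Real.sqrt lam) • v)
    ∧ ((Real.cos (Real.sqrt lam) • ((γ : ℝ) • (1 : Matrix (Fin n) (Fin n) ℝ))
        - A).det = 0 ↔
      ∃ (α : ℝ) (l : ℤ), (∃ v : Fin n → ℝ, v ≠ 0 ∧ P *ᵥ v = α • v) ∧
        -1 < α ∧ α < 1 ∧
        (lam = (2 * (l : ℝ) * Real.pi + Real.arccos α) ^ 2 ∨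
          lam = (2 * (l : ℝ) * Real.pi - Real.arccos α) ^ 2)) := by
  have hγ' : (γ : ℝ) ≠ 0 := by positivity
  have hA' : A = (γ : ℝ) • P := by
    rw [hP, smul_smul, mul_inv_cancel₀ hγ', one_smul]
  set c := Real.cos (Real.sqrt lam) with hc
  set t := Real.sqrt lam with ht
  have ht0 : t ^ 2 = lam := Real.sq_sqrt hpos.le
  -- the matrix factors
  have key : ∀ v : Fin n → ℝ,
      (c • ((γ : ℝ) • (1 : Matrix (Fin n) (Fin n) ℝ)) - A) *ᵥ v = 0 ↔
      P *ᵥ v = c • v := by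
    intro v
    rw [sub_mulVec, hA', smul_mulVec (γ : ℝ) P v,
      smul_mulVec c ((γ : ℝ) • (1 : Matrix (Fin n) (Fin n) ℝ)) v,
      smul_mulVec (γ : ℝ) (1 : Matrix (Fin n) (Fin n) ℝ) v, one_mulVec,
      sub_eq_zero, smul_comm c (γ : ℝ) v]
    constructor
    · intro h
      exact (smul_right_injective _ hγ' h).symm
    · intro h; rw [h]
  have first : (c • ((γ : ℝ) • (1 : Matrix (Fin n) (Fin n) ℝ)) - A).det = 0 ↔
      ∃ v : Fin n → ℝ, v ≠ 0 ∧ P *ᵥ v = c • v := by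
    rw [← Matrix.exists_mulVec_eq_zero_iff]
    exact exists_congr fun v => and_congr_right fun _ => key v
  refine ⟨first, first.trans ?_⟩
  -- c is strictly between -1 and 1
  have hne1 : c ≠ 1 := by
    intro h
    rcases (Real.cos_eq_one_iff t).1 h with ⟨k, hk⟩
    exact hneq (2 * k) (by rw [← ht0, ← hk]; push_cast; ring)
  have hnem1 : c ≠ -1 := by
    intro h
    have : Real.cos t = Real.cos Real.pi := by rw [← hc, h, Real.cos_pi]
    rcases Real.cos_eq_cos_iff.1 this with ⟨k, hk | hk⟩
    · exact hneq (1 - 2 * k)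
        (by rw [← ht0, show t = Real.pi - 2 * k * Real.pi by linarith]; push_cast; ring)
    · exact hneq (2 * k - 1)
        (by rw [← ht0, show t = 2 * k * Real.pi - Real.pi by linarith]; push_cast; ring)
  have hlt : c < 1 := lt_of_le_of_ne (Real.cos_le_one t) hne1
  have hgt : -1 < c := lt_of_le_of_ne (by simpa using (Real.neg_one_le_cos t)) (Ne.symm hnem1)
  constructor
  · rintro ⟨v, hv, hPv⟩
    refine ⟨c, ?_⟩
    have hcc : Real.cos (Real.arccos c) = c := Real.cos_arccos hgt.le hlt.le
    have : Real.cos (Real.arccos c) = Real.cos t := by rw [hcc]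
    rcases Real.cos_eq_cos_iff.1 this with ⟨k, hk | hk⟩
    · exact ⟨k, ⟨v, hv, hPv⟩, hgt, hlt, Or.inl (by rw [← ht0, hk])⟩
    · exact ⟨k, ⟨v, hv, hPv⟩, hgt, hlt, Or.inr (by rw [← ht0, hk])⟩
  · rintro ⟨α, l, ⟨v, hv, hPv⟩, hα1, hα2, hl | hl⟩ <;>
    · have hcα : c = α := by
        rw [hc, ht, hl, Real.sqrt_sq_eq_abs, Real.cos_abs]
        first
        | rw [show (2 * (l : ℝ) * Real.pi + Real.arccos α)
              = Real.arccos α + (l : ℝ) * (2 * Real.pi) by ring,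
            Real.cos_add_int_mul_two_pi]
        | rw [show (2 * (l : ℝ) * Real.pi - Real.arccos α)
              = -(Real.arccos α) + (l : ℝ) * (2 * Real.pi) by ring,
            Real.cos_add_int_mul_two_pi, Real.cos_neg]
        exact Real.cos_arccos hα1.le hα2.le
      exact ⟨v, hv, by rw [hPv, hcα]⟩
end

section
/- For a connected graph G on n vertices with edge connectivity η and algebraic connectivity ν_2 (second-smallest eigenvalue of the Laplacian L = D − A), the bound ν_2 ≥ 2η(1 − cos(π/n)) holds. -/
/-!
Let `v` be an eigenvector for `ν₂ ≠ 0`. It is orthogonal to the constants, and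
`ν₂ ‖v‖² = ∑_{ij ∈ E} (v_i - v_j)²`. List the entries of `v` in increasing order as
`w_0 ≤ ⋯ ≤ w_{n-1}`. For an edge whose endpoints sit at positions `p < q`, the increments being
nonnegative give `(w_q - w_p)² ≥ ∑_{p ≤ k < q} (w_{k+1} - w_k)²`; and each gap `k` separates the
first `k + 1` positions from the others, so at least `η` edges straddle it. Hence
`ν₂ ‖v‖² ≥ η ∑_k (w_{k+1} - w_k)²`. The last sum is the Dirichlet form of the path on `n` vertices
at the mean-zero vector `w`, so it is at least `2 (1 - cos (π / n)) ‖w‖²`, the path's algebraic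
connectivity: the path Laplacian has the orthogonal eigenbasis `i ↦ cos ((2i + 1) j π / (2n))`
with eigenvalues `2 - 2 cos (j π / n)`, `0 ≤ j < n`.
-/

open Finset Matrix Real

lemma sum_dotProduct_div_smul_eq {ι : Type*} [Fintype ι] [DecidableEq ι] (e : ι → ι → ℝ)
    (horth : Pairwise fun j k => e j ⬝ᵥ e k = 0) (hne : ∀ j, e j ⬝ᵥ e j ≠ 0) (f : ι → ℝ) :
    ∑ j, (e j ⬝ᵥ f / (e j ⬝ᵥ e j)) • e j = f := by
  let B : Matrix ι ι ℝ := of fun i j => e j i / (e j ⬝ᵥ e j)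
  have hAB : of e * B = 1 := by
    ext j k
    simp only [mul_apply, of_apply, B, one_apply, mul_div_assoc', ← sum_div]
    split_ifs with h
    · subst h; exact div_self (hne j)
    · rw [← dotProduct, horth h, zero_div]
  -- For square matrices a right inverse is also a left inverse: this is where `card ι` vectors
  -- being orthogonal forces them to span.
  have hBA : B *ᵥ (of e *ᵥ f) = f := by rw [mulVec_mulVec, mul_eq_one_comm.1 hAB, one_mulVec]
  ext i
  rw [← congrFun hBA i, Finset.sum_apply]
  simp only [mulVec, dotProduct, of_apply, B, Pi.smul_apply, smul_eq_mul]
  exact sum_congr rfl fun j _ => by ring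

def pathForm (n : ℕ) (f g : ℕ → ℝ) : ℝ :=
  ∑ k ∈ range (n - 1), (f (k + 1) - f k) * (g (k + 1) - g k)

noncomputable def pathEigenvector (n j i : ℕ) : ℝ :=
  cos ((2 * i + 1) * (j * π / (2 * n)))

noncomputable def pathEigenvalue (n j : ℕ) : ℝ :=
  2 - 2 * cos (j * π / n)

section Path

variable {n j : ℕ}

lemma pathForm_comm (f g : ℕ → ℝ) : pathForm n f g = pathForm n g f :=
  sum_congr rfl fun _ _ => mul_comm _ _

lemma pathForm_congr_right (f : ℕ → ℝ) {g g' : ℕ → ℝ} (h : ∀ i < n, g i = g' i) :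
    pathForm n f g = pathForm n f g' :=
  sum_congr rfl fun k hk => by
    rw [mem_range] at hk
    rw [h k (by omega), h (k + 1) (by omega)]

lemma pathForm_sum_right {ι : Type*} (f : ℕ → ℝ) (s : Finset ι) (c : ι → ℝ) (g : ι → ℕ → ℝ) :
    pathForm n f (fun i => ∑ j ∈ s, c j * g j i) = ∑ j ∈ s, c j * pathForm n f (g j) := by
  simp only [pathForm, mul_sum, ← sum_sub_distrib]
  rw [sum_comm]
  exact sum_congr rfl fun k _ => sum_congr rfl fun j _ => by ring

/-- Summation by parts. Truncated subtraction gives `g (0 - 1) = g 0`, the Neumann condition at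
the left end; `hg` is the one at the right end. -/
lemma pathForm_eq_sum_mul (f g : ℕ → ℝ) (hg : g n = g (n - 1)) :
    pathForm n f g = ∑ i ∈ range n, f i * (2 * g i - g (i - 1) - g (i + 1)) := by
  rcases n with _ | m
  · simp [pathForm]
  have hleft : ∑ i ∈ range (m + 1), f i * (g i - g (i - 1))
      = ∑ k ∈ range m, f (k + 1) * (g (k + 1) - g k) := by
    rw [sum_range_succ']; simp
  have hright : ∑ i ∈ range (m + 1), f i * (g (i + 1) - g i)
      = ∑ k ∈ range m, f k * (g (k + 1) - g k) := by
    rw [sum_range_succ, hg]; simp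
  calc pathForm (m + 1) f g
      = ∑ k ∈ range m, f (k + 1) * (g (k + 1) - g k) - ∑ k ∈ range m, f k * (g (k + 1) - g k) := by
        rw [pathForm, ← sum_sub_distrib]
        exact sum_congr rfl fun _ _ => by ring
    _ = _ := by
        rw [← hleft, ← hright, ← sum_sub_distrib]
        exact sum_congr rfl fun _ _ => by ring

lemma pathEigenvector_self : pathEigenvector n j n = pathEigenvector n j (n - 1) := by
  rcases n with _ | m
  · rfl
  simp only [pathEigenvector, add_tsub_cancel_right]
  rw [← cos_nat_mul_two_pi_sub _ j]
  congr 1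
  push_cast
  field_simp
  ring

lemma pathEigenvector_three_term (i : ℕ) :
    2 * pathEigenvector n j i - pathEigenvector n j (i - 1) - pathEigenvector n j (i + 1)
      = pathEigenvalue n j * pathEigenvector n j i := by
  set θ : ℝ := j * π / (2 * n) with hθ
  have hpred : pathEigenvector n j (i - 1) = cos ((2 * i + 1) * θ - 2 * θ) := by
    rcases i with _ | i
    · rw [← cos_neg]; simp only [pathEigenvector]; congr 1; push_cast; ring
    · simp only [pathEigenvector]; congr 1; push_cast; ring
  have hsucc : pathEigenvector n j (i + 1) = cos ((2 * i + 1) * θ + 2 * θ) := by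
    simp only [pathEigenvector]; congr 1; push_cast; ring
  have heig : pathEigenvalue n j = 2 - 2 * cos (2 * θ) := by
    simp only [pathEigenvalue, hθ]; congr 3; ring
  rw [hpred, hsucc, heig, cos_sub, cos_add]
  simp only [pathEigenvector]
  ring

lemma pathForm_pathEigenvector (f : ℕ → ℝ) :
    pathForm n f (pathEigenvector n j)
      = pathEigenvalue n j * ∑ i ∈ range n, pathEigenvector n j i * f i := by
  rw [pathForm_eq_sum_mul f _ pathEigenvector_self, mul_sum]
  exact sum_congr rfl fun i _ => by rw [pathEigenvector_three_term]; ring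

lemma pathEigenvalue_injOn : Set.InjOn (pathEigenvalue n) (Set.Iio n) := by
  intro j hj k hk h
  have hn : (0 : ℝ) < n := by exact_mod_cast (j.zero_le.trans_lt hj)
  have hmem : ∀ m < n, (m : ℝ) * π / n ∈ Set.Icc 0 π := fun m hm => by
    refine ⟨by positivity, ?_⟩
    rw [div_le_iff₀ hn, mul_comm π]
    gcongr
  have := injOn_cos (hmem j hj) (hmem k hk) (by simp only [pathEigenvalue] at h; linarith)
  field_simp at this
  exact_mod_cast this

lemma pathEigenvalue_one_le (h1 : 1 ≤ j) (hj : j ≤ n) :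
    pathEigenvalue n 1 ≤ pathEigenvalue n j := by
  have hn : (0 : ℝ) < n := by exact_mod_cast (zero_lt_one.trans_le (h1.trans hj))
  have : cos (j * π / n) ≤ cos (1 * π / n) := by
    apply cos_le_cos_of_nonneg_of_le_pi (by positivity)
    · rw [div_le_iff₀ hn, mul_comm π]
      gcongr
    · gcongr
      exact_mod_cast h1
  simp only [pathEigenvalue, Nat.cast_one]
  linarith

lemma sum_pathEigenvector_mul_eq_zero {k : ℕ} (hj : j < n) (hk : k < n) (hjk : j ≠ k) :
    ∑ i ∈ range n, pathEigenvector n j i * pathEigenvector n k i = 0 := by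
  have h := pathForm_comm (n := n) (pathEigenvector n j) (pathEigenvector n k)
  rw [pathForm_pathEigenvector, pathForm_pathEigenvector] at h
  have hswap : ∑ i ∈ range n, pathEigenvector n k i * pathEigenvector n j i
      = ∑ i ∈ range n, pathEigenvector n j i * pathEigenvector n k i :=
    sum_congr rfl fun _ _ => mul_comm _ _
  rw [hswap, ← sub_eq_zero, ← sub_mul] at h
  exact (mul_eq_zero.1 h).resolve_left
    (sub_ne_zero.2 fun h' => hjk (pathEigenvalue_injOn hk hj h').symm)

lemma sum_sq_pathEigenvector_pos (hj : j < n) : 0 < ∑ i ∈ range n, pathEigenvector n j i ^ 2 := by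
  have hn : (0 : ℝ) < n := by exact_mod_cast (j.zero_le.trans_lt hj)
  have h0 : 0 < pathEigenvector n j 0 := by
    simp only [pathEigenvector, CharP.cast_eq_zero, mul_zero, zero_add, one_mul]
    apply cos_pos_of_mem_Ioo
    constructor
    · linarith [show 0 ≤ j * π / (2 * n) by positivity, pi_pos]
    · rw [div_lt_iff₀ (by positivity)]
      have : (j : ℝ) < n := by exact_mod_cast hj
      nlinarith [pi_pos]
  exact lt_of_lt_of_le (by positivity) (single_le_sum (fun i _ => sq_nonneg (pathEigenvector n j i))
    (mem_range.2 (j.zero_le.trans_lt hj)))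

lemma sum_pathEigenvector_expansion (f : ℕ → ℝ) {i : ℕ} (hi : i < n) :
    ∑ j ∈ range n, (∑ l ∈ range n, pathEigenvector n j l * f l)
      / (∑ l ∈ range n, pathEigenvector n j l ^ 2) * pathEigenvector n j i = f i := by
  have hdot : ∀ (j : Fin n) (g : ℕ → ℝ), (fun l : Fin n => pathEigenvector n j l) ⬝ᵥ (fun l => g l)
      = ∑ l ∈ range n, pathEigenvector n j l * g l :=
    fun j g => Fin.sum_univ_eq_sum_range (fun l => pathEigenvector n j l * g l) n
  have h := congrFun (sum_dotProduct_div_smul_eq (fun j l : Fin n => pathEigenvector n j l)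
    (fun j k hjk => (hdot j (pathEigenvector n k)).trans
      (sum_pathEigenvector_mul_eq_zero j.isLt k.isLt (Fin.val_ne_of_ne hjk)))
    (fun j => by
      rw [hdot j (pathEigenvector n j)]
      simp_rw [← sq]
      exact (sum_sq_pathEigenvector_pos j.isLt).ne')
    (fun l => f l)) ⟨i, hi⟩
  simp only [Finset.sum_apply, Pi.smul_apply, smul_eq_mul, hdot] at h
  simp_rw [← sq] at h
  rw [← h]
  exact (Fin.sum_univ_eq_sum_range (fun j => (∑ l ∈ range n, pathEigenvector n j l * f l)
      / (∑ l ∈ range n, pathEigenvector n j l ^ 2) * pathEigenvector n j i) n).symm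

theorem pathEigenvalue_one_mul_sum_sq_le_pathForm (f : ℕ → ℝ) (hf : ∑ i ∈ range n, f i = 0) :
    pathEigenvalue n 1 * ∑ i ∈ range n, f i ^ 2 ≤ pathForm n f f := by
  set a : ℕ → ℝ := fun j => ∑ i ∈ range n, pathEigenvector n j i * f i
  set d : ℕ → ℝ := fun j => ∑ i ∈ range n, pathEigenvector n j i ^ 2
  have hexp : ∀ i < n, f i = ∑ j ∈ range n, a j / d j * pathEigenvector n j i :=
    fun i hi => (sum_pathEigenvector_expansion f hi).symm
  have hform : pathForm n f f = ∑ j ∈ range n, a j / d j * (pathEigenvalue n j * a j) := by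
    rw [pathForm_congr_right f hexp, pathForm_sum_right]
    simp_rw [pathForm_pathEigenvector]
    rfl
  have hnorm : ∑ i ∈ range n, f i ^ 2 = ∑ j ∈ range n, a j / d j * a j := by
    calc ∑ i ∈ range n, f i ^ 2
        = ∑ i ∈ range n, ∑ j ∈ range n, a j / d j * (pathEigenvector n j i * f i) := by
          refine sum_congr rfl fun i hi => ?_
          conv_lhs => rw [sq]; enter [1]; rw [hexp i (mem_range.1 hi)]
          rw [sum_mul]
          exact sum_congr rfl fun _ _ => by ring
      _ = _ := by rw [sum_comm]; simp_rw [← mul_sum]; rfl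
  have ha0 : a 0 = 0 := by simp [a, pathEigenvector, hf]
  rw [hform, hnorm, mul_sum]
  refine sum_le_sum fun j hj => ?_
  rcases j.eq_zero_or_pos with rfl | hj1
  · simp [ha0]
  · have hd : 0 < d j := sum_sq_pathEigenvector_pos (mem_range.1 hj)
    have : 0 ≤ a j / d j * a j := by
      rw [div_mul_eq_mul_div]; exact div_nonneg (mul_self_nonneg _) hd.le
    nlinarith [pathEigenvalue_one_le hj1 (mem_range.1 hj).le]

end Path

lemma sum_Ico_min_max_sq_le (W : ℕ → ℝ) {a b : ℕ}
    (hW : ∀ k ∈ Ico (min a b) (max a b), W k ≤ W (k + 1)) :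
    ∑ k ∈ Ico (min a b) (max a b), (W (k + 1) - W k) ^ 2 ≤ (W b - W a) ^ 2 := by
  wlog hab : a ≤ b generalizing a b
  · rw [sub_sq_comm, min_comm, max_comm] at *
    exact this hW (le_of_not_ge hab)
  rw [min_eq_left hab, max_eq_right hab] at *
  rw [← sum_Ico_sub W hab]
  exact sum_sq_le_sq_sum_of_nonneg fun k hk => sub_nonneg.2 (hW k hk)

lemma sum_sq_mul_card_le_sum_sq {α : Type*} (P : Finset α) (a b : α → ℕ) (W : ℕ → ℝ) {N : ℕ}
    (hW : ∀ k < N, W k ≤ W (k + 1)) (ha : ∀ p ∈ P, a p ≤ N) (hb : ∀ p ∈ P, b p ≤ N) :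
    ∑ k ∈ range N, (W (k + 1) - W k) ^ 2 * #{p ∈ P | min (a p) (b p) ≤ k ∧ k < max (a p) (b p)}
      ≤ ∑ p ∈ P, (W (b p) - W (a p)) ^ 2 := by
  calc _ = ∑ p ∈ P, ∑ k ∈ range N with min (a p) (b p) ≤ k ∧ k < max (a p) (b p),
        (W (k + 1) - W k) ^ 2 := by
        simp_rw [card_filter, Nat.cast_sum, mul_sum, sum_filter]
        rw [sum_comm]
        simp
    _ = ∑ p ∈ P, ∑ k ∈ Ico (min (a p) (b p)) (max (a p) (b p)), (W (k + 1) - W k) ^ 2 := by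
        refine sum_congr rfl fun p hp => sum_congr ?_ fun _ _ => rfl
        ext k
        have := ha p hp
        have := hb p hp
        simp only [mem_filter, mem_range, mem_Ico]
        omega
    _ ≤ _ := sum_le_sum fun p hp => sum_Ico_min_max_sq_le W fun k hk => hW k (by
        have := ha p hp
        have := hb p hp
        simp only [mem_Ico] at hk
        omega)

namespace SimpleGraph

variable {V : Type*} [Fintype V] [DecidableEq V] (G : SimpleGraph V) [DecidableRel G.Adj]

lemma lapMatrix_apply (R : Type*) [Ring R] (i k : V) :
    G.lapMatrix R i k = if i = k then (G.degree i : R) else if G.Adj i k then -1 else 0 := by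
  rw [lapMatrix, Matrix.sub_apply, degMatrix, diagonal_apply, adjMatrix_apply]
  split_ifs <;> simp_all

lemma sum_eq_zero_of_lapMatrix_mulVec_eq_smul {v : V → ℝ} {ν : ℝ} (hν : ν ≠ 0)
    (h : G.lapMatrix ℝ *ᵥ v = ν • v) : ∑ i, v i = 0 := by
  have h1 : (fun _ => 1) ⬝ᵥ (G.lapMatrix ℝ *ᵥ v) = 0 := by
    rw [dotProduct_mulVec, ← (G.isSymm_lapMatrix ℝ).eq, vecMul_transpose,
      lapMatrix_mulVec_const_eq_zero, zero_dotProduct]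
  rw [h, dotProduct_smul, smul_eq_mul] at h1
  simpa [dotProduct, hν] using h1

lemma mul_sum_sq_eq_of_lapMatrix_mulVec_eq_smul {v : V → ℝ} {ν : ℝ}
    (h : G.lapMatrix ℝ *ᵥ v = ν • v) :
    ν * ∑ i, v i ^ 2 = (∑ i, ∑ j, if G.Adj i j then (v i - v j) ^ 2 else 0) / 2 := by
  rw [← lapMatrix_toLinearMap₂', toLinearMap₂'_apply', h, dotProduct_smul, smul_eq_mul]
  simp [dotProduct, sq]

lemma le_card_adj_mem_not_mem {η : ℕ}
    (hη : η ∈ lowerBounds {k | ∃ s : Finset (Sym2 V), ↑s ⊆ G.edgeSet ∧ #s = k ∧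
      ¬ (G.deleteEdges ↑s).Connected})
    (S : Finset V) {a b : V} (ha : a ∈ S) (hb : b ∉ S) :
    η ≤ #{p : V × V | G.Adj p.1 p.2 ∧ p.1 ∈ S ∧ p.2 ∉ S} := by
  set P := ({p : V × V | G.Adj p.1 p.2 ∧ p.1 ∈ S ∧ p.2 ∉ S} : Finset (V × V))
  refine (hη ⟨P.image (fun p => s(p.1, p.2)), ?_, rfl, ?_⟩).trans card_image_le
  · intro e he
    obtain ⟨p, hp, rfl⟩ := mem_image.1 he
    exact (mem_filter.1 hp).2.1
  · rintro hconn
    obtain ⟨w⟩ := hconn.preconnected a b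
    obtain ⟨d, -, hd₁, hd₂⟩ := w.exists_boundary_dart S ha hb
    have hadj := d.adj
    rw [deleteEdges_adj] at hadj
    exact hadj.2 (mem_image.2 ⟨(d.fst, d.snd), mem_filter.2 ⟨mem_univ _, hadj.1, hd₁, hd₂⟩, rfl⟩)

lemma two_mul_le_card_adj_min_le_lt_max {η : ℕ}
    (hη : η ∈ lowerBounds {k | ∃ s : Finset (Sym2 V), ↑s ⊆ G.edgeSet ∧ #s = k ∧
      ¬ (G.deleteEdges ↑s).Connected})
    (r : V → ℕ) {a b : V} {k : ℕ} (ha : r a ≤ k) (hb : k < r b) :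
    2 * η ≤ #{p : V × V | G.Adj p.1 p.2 ∧ min (r p.1) (r p.2) ≤ k ∧ k < max (r p.1) (r p.2)} := by
  set S : Finset V := {x | r x ≤ k}
  have haS : a ∈ S := mem_filter.2 ⟨mem_univ a, ha⟩
  have hbS : b ∉ S := fun h => (mem_filter.1 h).2.not_gt hb
  calc 2 * η
      ≤ #{p : V × V | G.Adj p.1 p.2 ∧ p.1 ∈ S ∧ p.2 ∉ S}
        + #{p : V × V | G.Adj p.1 p.2 ∧ p.1 ∈ Sᶜ ∧ p.2 ∉ Sᶜ} := by
        rw [two_mul]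
        exact add_le_add (G.le_card_adj_mem_not_mem hη S haS hbS)
          (G.le_card_adj_mem_not_mem hη Sᶜ (mem_compl.2 hbS) (by simpa using haS))
    _ = _ := by
        rw [← card_union_of_disjoint (disjoint_filter.2 fun p _ h₁ h₂ => by
          simp only [mem_compl] at h₂; exact h₂.2.1 h₁.2.1), ← filter_or]
        refine congrArg card (filter_congr fun p _ => ?_)
        simp only [S, mem_compl, mem_filter, mem_univ, true_and, not_not, ← and_or_left]
        exact and_congr_right fun _ => by omega

end SimpleGraph

section SortedExtend

variable {n : ℕ} (v : Fin n → ℝ)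

noncomputable def sortedExtend (k : ℕ) : ℝ :=
  if h : k < n then v (Tuple.sort v ⟨k, h⟩) else 0

lemma sortedExtend_val (i : Fin n) : sortedExtend v i = v (Tuple.sort v i) :=
  dif_pos i.isLt

lemma sortedExtend_symm_sort (i : Fin n) : sortedExtend v ((Tuple.sort v).symm i) = v i := by
  rw [sortedExtend_val, Equiv.apply_symm_apply]

lemma sortedExtend_le_succ {k : ℕ} (hk : k + 1 < n) :
    sortedExtend v k ≤ sortedExtend v (k + 1) := by
  simp only [sortedExtend, dif_pos hk, dif_pos (k.lt_succ_self.trans hk)]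
  exact Tuple.monotone_sort v (Fin.mk_le_mk.2 k.le_succ)

lemma sum_range_sortedExtend (g : ℝ → ℝ) :
    ∑ k ∈ range n, g (sortedExtend v k) = ∑ i, g (v i) := by
  rw [← Fin.sum_univ_eq_sum_range (fun k => g (sortedExtend v k))]
  simp_rw [sortedExtend_val]
  exact Equiv.sum_comp (Tuple.sort v) (g ∘ v)

end SortedExtend

lemma SimpleGraph.mul_pathForm_sortedExtend_le {n : ℕ} (G : SimpleGraph (Fin n))
    [DecidableRel G.Adj] {η : ℕ}
    (hη : η ∈ lowerBounds {k | ∃ s : Finset (Sym2 (Fin n)), ↑s ⊆ G.edgeSet ∧ #s = k ∧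
      ¬ (G.deleteEdges ↑s).Connected})
    (v : Fin n → ℝ) :
    η * pathForm n (sortedExtend v) (sortedExtend v)
      ≤ (∑ i, ∑ j, if G.Adj i j then (v i - v j) ^ 2 else 0) / 2 := by
  set W := sortedExtend v
  set r : Fin n → ℕ := fun x => (Tuple.sort v).symm x
  set A : Finset (Fin n × Fin n) := {p | G.Adj p.1 p.2}
  have hcut : ∀ k ∈ range (n - 1),
      2 * η ≤ #{p ∈ A | min (r p.1) (r p.2) ≤ k ∧ k < max (r p.1) (r p.2)} := by
    intro k hk
    rw [mem_range] at hk
    rw [filter_filter]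
    exact G.two_mul_le_card_adj_min_le_lt_max hη r
      (a := Tuple.sort v ⟨0, by omega⟩) (b := Tuple.sort v ⟨n - 1, by omega⟩)
      (by simp [r]) (by simp [r]; omega)
  have hcount := sum_sq_mul_card_le_sum_sq A (fun p => r p.1) (fun p => r p.2) W (N := n - 1)
    (fun k hk => sortedExtend_le_succ v (by omega))
    (fun p _ => Nat.le_sub_one_of_lt ((Tuple.sort v).symm p.1).isLt)
    (fun p _ => Nat.le_sub_one_of_lt ((Tuple.sort v).symm p.2).isLt)
  have hedges : (∑ i, ∑ j, if G.Adj i j then (v i - v j) ^ 2 else 0)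
      = ∑ p ∈ A, (W (r p.2) - W (r p.1)) ^ 2 := by
    rw [sum_filter, ← univ_product_univ, sum_product]
    refine sum_congr rfl fun i _ => sum_congr rfl fun j _ => ?_
    simp only [W, r, sortedExtend_symm_sort, sub_sq_comm (v j)]
  calc η * pathForm n W W
      = (∑ k ∈ range (n - 1), (W (k + 1) - W k) ^ 2 * (2 * η : ℕ)) / 2 := by
        rw [pathForm, mul_sum, sum_div]
        refine sum_congr rfl fun k _ => ?_
        push_cast; ring
    _ ≤ (∑ k ∈ range (n - 1), (W (k + 1) - W k) ^ 2
          * #{p ∈ A | min (r p.1) (r p.2) ≤ k ∧ k < max (r p.1) (r p.2)}) / 2 := by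
        gcongr with k hk
        exact_mod_cast hcut k hk
    _ ≤ _ := by rw [hedges]; gcongr

theorem algebraic_connectivity_ge_edge_connectivity_bound_general (n : ℕ)
    (G : SimpleGraph (Fin n)) [DecidableRel G.Adj]
    (L : Matrix (Fin n) (Fin n) ℝ)
    (hL : ∀ i k, L i k = if i = k then (G.degree i : ℝ)
      else if G.Adj i k then -1 else 0)
    (η : ℕ)
    (hη : IsLeast {k : ℕ | ∃ s : Finset (Sym2 (Fin n)), ↑s ⊆ G.edgeSet ∧
        s.card = k ∧ ¬ (G.deleteEdges ↑s).Connected} η)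
    (ν₂ : ℝ) (hν₂ne : ν₂ ≠ 0)
    (hev : ∃ v : Fin n → ℝ, v ≠ 0 ∧ L *ᵥ v = ν₂ • v) :
    2 * (η : ℝ) * (1 - Real.cos (Real.pi / n)) ≤ ν₂ := by
  obtain ⟨v, hv0, hLv⟩ := hev
  obtain rfl : L = G.lapMatrix ℝ :=
    Matrix.ext fun i k => (hL i k).trans (G.lapMatrix_apply ℝ i k).symm
  have hpath :
      pathEigenvalue n 1 * ∑ i, v i ^ 2 ≤ pathForm n (sortedExtend v) (sortedExtend v) := by
    rw [← sum_range_sortedExtend v (· ^ 2)]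
    exact pathEigenvalue_one_mul_sum_sq_le_pathForm _
      ((sum_range_sortedExtend v id).trans (G.sum_eq_zero_of_lapMatrix_mulVec_eq_smul hν₂ne hLv))
  have hpos : 0 < ∑ i, v i ^ 2 := by
    obtain ⟨i, hi⟩ := Function.ne_iff.1 hv0
    exact sum_pos' (fun j _ => sq_nonneg (v j)) ⟨i, mem_univ i, pow_two_pos_of_ne_zero hi⟩
  refine le_of_mul_le_mul_right ?_ hpos
  calc 2 * (η : ℝ) * (1 - cos (π / n)) * ∑ i, v i ^ 2
      = η * (pathEigenvalue n 1 * ∑ i, v i ^ 2) := by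
        rw [pathEigenvalue, Nat.cast_one, one_mul]; ring
    _ ≤ η * pathForm n (sortedExtend v) (sortedExtend v) := by gcongr
    _ ≤ (∑ i, ∑ j, if G.Adj i j then (v i - v j) ^ 2 else 0) / 2 :=
        G.mul_pathForm_sortedExtend_le hη.2 v
    _ = ν₂ * ∑ i, v i ^ 2 := (G.mul_sum_sq_eq_of_lapMatrix_mulVec_eq_smul hLv).symm

/-- For a connected graph `G` on `n` vertices with edge
connectivity `η` (least cardinality of a set of edges whose deletion
disconnects `G`) and algebraic connectivity `ν₂` (second-smallest eigenvalue of
the Laplacian `L = D − A`, i.e. the smallest nonzero eigenvalue since `G` is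
connected), one has `ν₂ ≥ 2η(1 − cos(π/n))`. -/
theorem algebraic_connectivity_ge_edge_connectivity_bound (n : ℕ) (hn : 2 ≤ n)
    (G : SimpleGraph (Fin n)) [DecidableRel G.Adj] (hconn : G.Connected)
    (L : Matrix (Fin n) (Fin n) ℝ)
    (hL : ∀ i k, L i k = if i = k then (G.degree i : ℝ)
      else if G.Adj i k then -1 else 0)
    (η : ℕ)
    (hη : IsLeast {k : ℕ | ∃ s : Finset (Sym2 (Fin n)), ↑s ⊆ G.edgeSet ∧
        s.card = k ∧ ¬ (G.deleteEdges ↑s).Connected} η)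
    (ν₂ : ℝ) (hν₂ne : ν₂ ≠ 0)
    (hev : ∃ v : Fin n → ℝ, v ≠ 0 ∧ L *ᵥ v = ν₂ • v)
    (hmin : ∀ ν : ℝ, ν ≠ 0 → (∃ v : Fin n → ℝ, v ≠ 0 ∧ L *ᵥ v = ν • v) →
        ν₂ ≤ ν) :
    2 * (η : ℝ) * (1 - Real.cos (Real.pi / n)) ≤ ν₂ :=
  algebraic_connectivity_ge_edge_connectivity_bound_general n G L hL η hη ν₂ hν₂ne hev
end

section
/- For a connected graph G on n vertices with diameter diam(G), the algebraic connectivity satisfies ν_2 ≥ 4/(n · diam(G)). -/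
open Matrix Finset

lemma sum_darts_eq {V : Type*} [Fintype V] [DecidableEq V] (G : SimpleGraph V)
    [DecidableRel G.Adj] (f : V → V → ℝ) :
    ∑ d : G.Dart, f d.toProd.1 d.toProd.2 = ∑ i, ∑ k, if G.Adj i k then f i k else 0 := by
  rw [← Finset.sum_product', ← Finset.sum_filter]
  refine Finset.sum_bij (fun d _ => d.toProd) ?_ ?_ ?_ ?_
  · intro d _
    simp [Finset.mem_filter, d.adj]
  · intro a _ b _ h
    exact SimpleGraph.Dart.toProd_injective h
  · intro p hp
    have hadj : G.Adj p.1 p.2 := (Finset.mem_filter.mp hp).2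
    exact ⟨SimpleGraph.Dart.mk p hadj, Finset.mem_univ _, rfl⟩
  · intro d _; rfl

lemma walk_telescope {V : Type*} (G : SimpleGraph V) (x : V → ℝ) {a b : V} (p : G.Walk a b) :
    x a - x b = (p.darts.map fun d => x d.toProd.1 - x d.toProd.2).sum := by
  induction p with
  | nil => simp
  | @cons u c w h q ih => simp only [SimpleGraph.Walk.darts_cons, List.map_cons, List.sum_cons]
                          rw [← ih]; ring

lemma quad_form {n : ℕ} (G : SimpleGraph (Fin n)) [DecidableRel G.Adj]
    (L : Matrix (Fin n) (Fin n) ℝ)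
    (hL : ∀ i k, L i k = if i = k then (G.degree i : ℝ)
      else if G.Adj i k then -1 else 0) (x : Fin n → ℝ) :
    ∑ i, ∑ k, (if G.Adj i k then (x i - x k)^2 else 0) = 2 * (x ⬝ᵥ (L *ᵥ x)) := by
  have hdeg : ∀ i, (G.degree i : ℝ) = ∑ k, if G.Adj i k then (1:ℝ) else 0 := by
    intro i
    rw [SimpleGraph.degree, SimpleGraph.neighborFinset_eq_filter, Finset.card_filter]
    push_cast
    rfl
  have key1 : ∑ i, ∑ k, (if G.Adj i k then x i ^ 2 else 0)
      = ∑ i, (G.degree i : ℝ) * x i ^ 2 := by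
    refine Finset.sum_congr rfl fun i _ => ?_
    rw [hdeg, Finset.sum_mul]
    exact Finset.sum_congr rfl fun k _ => by split_ifs <;> ring
  have key2 : ∑ i, ∑ k, (if G.Adj i k then x k ^ 2 else 0)
      = ∑ i, (G.degree i : ℝ) * x i ^ 2 := by
    rw [Finset.sum_comm]
    rw [← key1]
    refine Finset.sum_congr rfl fun k _ => Finset.sum_congr rfl fun i _ => ?_
    exact if_congr (G.adj_comm i k) rfl rfl
  have key3 : x ⬝ᵥ (L *ᵥ x) = ∑ i, (G.degree i : ℝ) * x i ^ 2
      - ∑ i, ∑ k, (if G.Adj i k then x i * x k else 0) := by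
    rw [dotProduct, ← Finset.sum_sub_distrib]
    refine Finset.sum_congr rfl fun i _ => ?_
    rw [mulVec, dotProduct, Finset.mul_sum]
    have : ∀ k, x i * (L i k * x k) =
        (if i = k then (G.degree i : ℝ) * x i ^ 2 else 0)
        + - (if G.Adj i k then x i * x k else 0) := by
      intro k
      rw [hL]
      split_ifs with h1 h2
      · exact absurd (h1 ▸ h2) (G.irrefl)
      · subst h1; ring
      · ring
      · ring
    rw [Finset.sum_congr rfl fun k _ => this k, Finset.sum_add_distrib,
      Finset.sum_ite_eq univ i (fun _ => (G.degree i : ℝ) * x i ^ 2), if_pos (mem_univ i),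
      Finset.sum_neg_distrib]
    ring
  have expand : ∀ i k : Fin n, (if G.Adj i k then (x i - x k)^2 else 0)
      = (if G.Adj i k then x i ^ 2 else 0) + (if G.Adj i k then x k ^ 2 else 0)
        - 2 * (if G.Adj i k then x i * x k else 0) := by
    intro i k; split_ifs <;> ring
  calc ∑ i, ∑ k, (if G.Adj i k then (x i - x k)^2 else 0)
      = ∑ i, ∑ k, ((if G.Adj i k then x i ^ 2 else 0) + (if G.Adj i k then x k ^ 2 else 0)
        - 2 * (if G.Adj i k then x i * x k else 0)) := by
        exact Finset.sum_congr rfl fun i _ => Finset.sum_congr rfl fun k _ => expand i k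
    _ = 2 * (x ⬝ᵥ (L *ᵥ x)) := by
        simp only [Finset.sum_sub_distrib, Finset.sum_add_distrib, ← Finset.mul_sum]
        rw [key1, key2, key3]; ring

/-- For a connected graph `G` on `n` vertices with diameter
`diam(G)` (the maximum graph distance between two vertices), the algebraic
connectivity `ν₂` (second-smallest eigenvalue of the Laplacian `L = D − A`,
i.e. the smallest nonzero eigenvalue since `G` is connected) satisfies
`ν₂ ≥ 4/(n · diam(G))`. -/
theorem algebraic_connectivity_ge_diameter_bound (n : ℕ) (hn : 2 ≤ n)
    (G : SimpleGraph (Fin n)) [DecidableRel G.Adj] (hconn : G.Connected)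
    (L : Matrix (Fin n) (Fin n) ℝ)
    (hL : ∀ i k, L i k = if i = k then (G.degree i : ℝ)
      else if G.Adj i k then -1 else 0)
    (D : ℕ)
    (hD : IsGreatest {d : ℕ | ∃ u v : Fin n, G.dist u v = d} D)
    (ν₂ : ℝ) (hν₂ne : ν₂ ≠ 0)
    (hev : ∃ v : Fin n → ℝ, v ≠ 0 ∧ L *ᵥ v = ν₂ • v)
    (hmin : ∀ ν : ℝ, ν ≠ 0 → (∃ v : Fin n → ℝ, v ≠ 0 ∧ L *ᵥ v = ν • v) →
        ν₂ ≤ ν) :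
    4 / ((n : ℝ) * (D : ℝ)) ≤ ν₂ := by
  obtain ⟨v, hv0, hLv⟩ := hev
  have npos : 0 < n := by omega
  -- D ≥ 1
  have hD1 : 1 ≤ D := by
    have hne : (⟨0, by omega⟩ : Fin n) ≠ ⟨1, by omega⟩ := by simp [Fin.ext_iff]
    have h1 : 0 < G.dist ⟨0, by omega⟩ ⟨1, by omega⟩ := hconn.pos_dist_of_ne hne
    have h2 : G.dist ⟨0, by omega⟩ ⟨1, by omega⟩ ≤ D := hD.2 ⟨_, _, rfl⟩
    omega
  set S := ∑ i, v i ^ 2 with hSdef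
  have hS0 : 0 < S := by
    obtain ⟨i, hi⟩ := Function.ne_iff.mp hv0
    have h1 : v i ^ 2 ≤ S := Finset.single_le_sum (fun j _ => sq_nonneg (v j)) (mem_univ i)
    have h2 : 0 < v i ^ 2 := lt_of_le_of_ne (sq_nonneg _) (Ne.symm (pow_ne_zero 2 hi))
    linarith
  have hdot : v ⬝ᵥ (L *ᵥ v) = ν₂ * S := by
    rw [hLv, hSdef, Finset.mul_sum, dotProduct]
    exact Finset.sum_congr rfl fun i _ => by simp [smul_eq_mul]; ring
  have hQv : ∑ i, ∑ k, (if G.Adj i k then (v i - v k)^2 else 0) = 2 * (ν₂ * S) := by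
    rw [quad_form G L hL v, hdot]
  have hν2pos : 0 < ν₂ := by
    have hQnn : 0 ≤ ∑ i, ∑ k, (if G.Adj i k then (v i - v k)^2 else 0) :=
      Finset.sum_nonneg fun i _ => Finset.sum_nonneg fun k _ => by positivity
    rcases lt_trichotomy ν₂ 0 with h | h | h
    · nlinarith
    · exact absurd h hν₂ne
    · exact h
  -- sum of v is zero
  have hsym : ∀ i k, L i k = L k i := by
    intro i k
    rw [hL i k, hL k i]
    by_cases h : i = k
    · subst h; simp
    · simp [h, Ne.symm h, G.adj_comm i k]
  have hrow : ∀ i, ∑ k, L i k = 0 := by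
    intro i
    have hterm : ∀ k, L i k = (if i = k then (G.degree i : ℝ) else 0)
        + (if G.Adj i k then -1 else 0) := by
      intro k
      rw [hL]
      by_cases h : i = k
      · subst h; simp
      · simp [h]
    rw [Finset.sum_congr rfl fun k _ => hterm k, Finset.sum_add_distrib,
      Finset.sum_ite_eq univ i (fun _ => (G.degree i : ℝ)), if_pos (mem_univ i)]
    have hdeg : ∑ k, (if G.Adj i k then (-1 : ℝ) else 0) = -(G.degree i : ℝ) := by
      rw [SimpleGraph.degree, SimpleGraph.neighborFinset_eq_filter, Finset.card_filter]
      push_cast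
      rw [← Finset.sum_neg_distrib]
      exact Finset.sum_congr rfl fun k _ => by split_ifs <;> simp
    rw [hdeg]
    ring
  have hsumv : ∑ i, v i = 0 := by
    have h1 : ν₂ * ∑ i, v i = 0 := by
      calc ν₂ * ∑ i, v i = ∑ i, (L *ᵥ v) i := by
            rw [hLv, Finset.mul_sum]
            exact Finset.sum_congr rfl fun i _ => by simp [smul_eq_mul]
        _ = ∑ k, (∑ i, L i k) * v k := by
            simp only [mulVec, dotProduct]
            rw [Finset.sum_comm]
            exact Finset.sum_congr rfl fun k _ => by rw [Finset.sum_mul]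
        _ = 0 := by
            refine Finset.sum_eq_zero fun k _ => ?_
            have : ∑ i, L i k = 0 := by
              rw [Finset.sum_congr rfl fun i _ => hsym i k]
              exact hrow k
            rw [this, zero_mul]
    exact (mul_eq_zero.mp h1).resolve_left hν₂ne
  -- extremes
  obtain ⟨i0, -, hmax⟩ := Finset.exists_max_image (univ : Finset (Fin n)) v
    ⟨⟨0, npos⟩, mem_univ _⟩
  obtain ⟨j0, -, hminv⟩ := Finset.exists_min_image (univ : Finset (Fin n)) v
    ⟨⟨0, npos⟩, mem_univ _⟩
  set c := (v i0 + v j0) / 2 with hc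
  set M := (v i0 - v j0) / 2 with hM
  set w := fun i => v i - c with hw
  have hwbound : ∀ i, w i ^ 2 ≤ M ^ 2 := by
    intro i
    have h1 := hmax i (mem_univ i)
    have h2 := hminv i (mem_univ i)
    refine sq_le_sq' ?_ ?_ <;> simp only [hw, hc, hM] <;> linarith
  have hSw : ∑ i, w i ^ 2 = S + n * c ^ 2 := by
    have : ∀ i, w i ^ 2 = v i ^ 2 - 2 * c * v i + c ^ 2 := fun i => by simp only [hw]; ring
    rw [Finset.sum_congr rfl fun i _ => this i, Finset.sum_add_distrib,
      Finset.sum_sub_distrib, ← Finset.mul_sum, hsumv, Finset.sum_const, card_univ,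
      Fintype.card_fin, nsmul_eq_mul]
    ring
  have hSnM : S ≤ (n : ℝ) * M ^ 2 := by
    have h1 : ∑ i, w i ^ 2 ≤ (n : ℝ) * M ^ 2 := by
      calc ∑ i, w i ^ 2 ≤ ∑ _i : Fin n, M ^ 2 := Finset.sum_le_sum fun i _ => hwbound i
        _ = (n : ℝ) * M ^ 2 := by rw [Finset.sum_const, card_univ, Fintype.card_fin, nsmul_eq_mul]
    have h2 : 0 ≤ (n : ℝ) * c ^ 2 := by positivity
    linarith
  have hQw : ∑ i, ∑ k, (if G.Adj i k then (w i - w k)^2 else 0) = 2 * (ν₂ * S) := by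
    rw [← hQv]
    refine Finset.sum_congr rfl fun i _ => Finset.sum_congr rfl fun k _ => ?_
    have : w i - w k = v i - v k := by simp only [hw]; ring
    rw [this]
  -- path from i0 to j0
  obtain ⟨p, hpath, hplen⟩ := hconn.exists_path_of_dist i0 j0
  have hdD : p.length ≤ D := hplen ▸ hD.2 ⟨i0, j0, rfl⟩
  have hdn : p.darts.Nodup := hpath.isTrail.edges_nodup.of_map
  set s := p.darts.toFinset with hs
  have hcard : s.card = p.length := by
    rw [hs, List.toFinset_card_of_nodup hdn, SimpleGraph.Walk.length_darts]
  have htel : w i0 - w j0 = ∑ d ∈ s, (w d.toProd.1 - w d.toProd.2) := by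
    rw [walk_telescope G w p, hs, List.sum_toFinset _ hdn]
  have hCS : (w i0 - w j0) ^ 2 ≤ (D : ℝ) * ∑ d ∈ s, (w d.toProd.1 - w d.toProd.2) ^ 2 := by
    rw [htel]
    calc (∑ d ∈ s, (w d.toProd.1 - w d.toProd.2)) ^ 2
        ≤ (s.card : ℝ) * ∑ d ∈ s, (w d.toProd.1 - w d.toProd.2) ^ 2 :=
          sq_sum_le_card_mul_sum_sq
      _ ≤ (D : ℝ) * ∑ d ∈ s, (w d.toProd.1 - w d.toProd.2) ^ 2 := by
          apply mul_le_mul_of_nonneg_right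
          · exact_mod_cast hcard ▸ hdD
          · exact Finset.sum_nonneg fun d _ => sq_nonneg _
  -- double counting: 2 * path-sum ≤ total dart sum = Q w
  have hpath_le : 2 * ∑ d ∈ s, (w d.toProd.1 - w d.toProd.2) ^ 2 ≤ 2 * (ν₂ * S) := by
    set t := s.image SimpleGraph.Dart.symm with ht
    have hedges : (p.darts.map SimpleGraph.Dart.edge).Nodup := hpath.isTrail.edges_nodup
    have hdisj : Disjoint s t := by
      rw [Finset.disjoint_left]
      intro d hds hdt
      rw [ht, Finset.mem_image] at hdt
      obtain ⟨e, hes, hed⟩ := hdt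
      have h1 : d ∈ p.darts := List.mem_toFinset.mp hds
      have h2 : e ∈ p.darts := List.mem_toFinset.mp hes
      have h3 : SimpleGraph.Dart.edge d = SimpleGraph.Dart.edge e := by
        rw [← hed, SimpleGraph.Dart.edge_symm]
      have h4 : d = e := List.inj_on_of_nodup_map hedges h1 h2 h3
      rw [← h4] at hed
      exact SimpleGraph.Dart.symm_ne d hed
    have hsymsum : ∑ d ∈ t, (w d.toProd.1 - w d.toProd.2) ^ 2
        = ∑ d ∈ s, (w d.toProd.1 - w d.toProd.2) ^ 2 := by
      rw [ht, Finset.sum_image (fun a _ b _ h => SimpleGraph.Dart.symm_involutive.injective h)]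
      refine Finset.sum_congr rfl fun d _ => ?_
      have h1 : (SimpleGraph.Dart.symm d).toProd = d.toProd.swap := rfl
      rw [h1]
      simp [Prod.swap]
      ring
    have htot : ∑ d ∈ s ∪ t, (w d.toProd.1 - w d.toProd.2) ^ 2
        ≤ ∑ d : G.Dart, (w d.toProd.1 - w d.toProd.2) ^ 2 :=
      Finset.sum_le_sum_of_subset_of_nonneg (Finset.subset_univ _)
        (fun d _ _ => sq_nonneg _)
    rw [Finset.sum_union hdisj, hsymsum] at htot
    have hdarts : ∑ d : G.Dart, (w d.toProd.1 - w d.toProd.2) ^ 2 = 2 * (ν₂ * S) := by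
      rw [sum_darts_eq G (fun i k => (w i - w k) ^ 2), hQw]
    linarith [htot, hdarts ▸ htot]
  -- combine
  have hM2 : (2 * M) ^ 2 ≤ (D : ℝ) * (ν₂ * S) := by
    have h1 : w i0 - w j0 = 2 * M := by simp only [hw, hM]; ring
    have h2 : ∑ d ∈ s, (w d.toProd.1 - w d.toProd.2) ^ 2 ≤ ν₂ * S := by linarith
    calc (2 * M) ^ 2 = (w i0 - w j0) ^ 2 := by rw [h1]
      _ ≤ (D : ℝ) * ∑ d ∈ s, (w d.toProd.1 - w d.toProd.2) ^ 2 := hCS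
      _ ≤ (D : ℝ) * (ν₂ * S) := by
          apply mul_le_mul_of_nonneg_left h2 (by positivity)
  have hM2pos : 0 < M ^ 2 := by nlinarith [hS0, hSnM]
  have hDpos : (0 : ℝ) < (D : ℝ) := by exact_mod_cast Nat.lt_of_lt_of_le Nat.zero_lt_one hD1
  have hnpos : (0 : ℝ) < (n : ℝ) := by exact_mod_cast npos
  rw [div_le_iff₀ (by positivity)]
  -- 4 ≤ ν₂ * (n * D) : from 4 M² ≤ D ν₂ S ≤ D ν₂ n M²
  nlinarith [hM2, hSnM, hM2pos, mul_le_mul_of_nonneg_left hSnM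
    (le_of_lt (mul_pos hDpos hν2pos))]
end
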